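/- Focused product distributions have small parity bias: There exists N such that for every n ≥ N the following holds with m = n^256 (so √m = n^128 is an integer). Let I ⊆ [n] be nonempty and let x (over [m]^I) and y (over ({0,1}^m)^I) be independent random variables such that the product distribution x × y is focused. Then |E[(−1)^(Σ_{i∈I} Ind_m(x_i, y_i))]| ≤ (1/2) · n^(−5|I|). -/

import Mathlib

open Finset

/-- The bucket index of `j ∈ [m]` where `m = n^256` is partitioned into `√m = n^128`
consecutive buckets of size `√m = n^128` each. -/
def bucket (n : ℕ) (j : Fin (n ^ 256)) : Fin (n ^ 128) :=
  ⟨j.val / n ^ 128, by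
    have hj := j.isLt
    have hn : 0 < n := by
      rcases Nat.eq_zero_or_pos n with rfl | h
      · exact absurd hj (by norm_num)
      · exact h
    have h256 : n ^ 256 = n ^ 128 * n ^ 128 := by ring
    exact Nat.div_lt_of_lt_mul (h256 ▸ hj)⟩

/-- The product distribution `x × y` (given by pmfs `px`, `py` over `[m]^I` resp.
`({0,1}^m)^I`, with `m = n^256`) is *focused*: there is a partial assignment
`σ ∈ {0,1,*}^I` (encoded by `Option Bool`, `none` = `*`) with free set `I' = σ⁻¹(*)` and
bucket indices `ℓᵢ` such that `|I'| ≥ |I|/2`; the gadget outputs agree with `σ` on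
`I ∖ I'` with probability 1; for `i ∈ I'` the pointer `xᵢ` lies in bucket `T_{ℓᵢ}` with
probability 1; `Pr[x_{I'} = a] ≤ (√m)^(−0.4|I'|)` for every `a`; and
`Pr[y_T = γ] ≤ 2·2^(−|I'|·√m)` for every `γ`, where `T = ⋃_{i∈I'} {i} × T_{ℓᵢ}`. -/
def Focused (n : ℕ) (I : Finset (Fin n))
    (px : ({i // i ∈ I} → Fin (n ^ 256)) → ℝ)
    (py : ({i // i ∈ I} → Fin (n ^ 256) → Bool) → ℝ) : Prop :=
  ∃ (σ : {i // i ∈ I} → Option Bool) (ℓ : {i // i ∈ I} → Fin (n ^ 128)),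
    -- |I'| ≥ |I|/2
    I.card ≤ 2 * (Finset.univ.filter fun i => σ i = none).card ∧
    -- the gadget outputs agree with σ on I ∖ I' with probability 1
    (∀ x, px x ≠ 0 → ∀ y, py y ≠ 0 → ∀ i, ∀ b : Bool, σ i = some b → y i (x i) = b) ∧
    -- for each i ∈ I', the pointer x_i lies in the bucket T_{ℓ_i} with probability 1
    (∀ x, px x ≠ 0 → ∀ i, σ i = none → bucket n (x i) = ℓ i) ∧
    -- Pr[x_{I'} = a] ≤ (√m)^(−0.4|I'|) for every a
    (∀ a : {i // i ∈ I} → Fin (n ^ 256),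
      ∑ x ∈ Finset.univ.filter
          (fun x : {i // i ∈ I} → Fin (n ^ 256) => ∀ i, σ i = none → x i = a i), px x ≤
        ((n ^ 128 : ℕ) : ℝ) ^
          (-(0.4 * (((Finset.univ.filter fun i => σ i = none).card : ℝ))))) ∧
    -- Pr[y_T = γ] ≤ 2·2^(−|I'|·√m) for every γ
    (∀ γ : {i // i ∈ I} → Fin (n ^ 256) → Bool,
      ∑ y ∈ Finset.univ.filter
          (fun y : {i // i ∈ I} → Fin (n ^ 256) → Bool =>
            ∀ i, σ i = none → ∀ j, bucket n j = ℓ i → y i j = γ i j), py y ≤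
        2 * (2 : ℝ) ^
          (-((((Finset.univ.filter fun i => σ i = none).card : ℝ)) * ((n ^ 128 : ℕ) : ℝ))))

/-!
On the free coordinates `i` the pointer `xᵢ` stays in the bucket `T_{ℓᵢ}`, so the gadget reads
the bit of `yᵢ` at the offset `αᵢ` of `xᵢ` inside that bucket, while the fixed coordinates only
contribute a constant sign `ε = ±1`. Hence the bias is `ε ∑_{α,γ} P(α) Q(γ) χ_α(γ)`, where `P`
is the law of the offsets, `Q` the law of the `k √m` bucket bits, and
`χ_α(γ) = (-1)^{∑ᵢ γᵢ(αᵢ)}`. The `χ_α` are orthogonal, so Cauchy–Schwarz bounds the squared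
bias by `2^{k√m} ‖P‖₂² ‖Q‖₂² ≤ 2^{k√m} · max P · max Q ≤ 2 (√m)^{-0.4k}`, which is far below
`n^{-10|I|}` because `k ≥ |I|/2`.
-/

def boolSign (b : Bool) : ℝ := if b then -1 else 1

lemma boolSign_not (b : Bool) : boolSign (!b) = -boolSign b := by
  cases b <;> simp [boolSign]

lemma boolSign_mul_self (b : Bool) : boolSign b * boolSign b = 1 := by
  cases b <;> simp [boolSign]

lemma abs_boolSign (b : Bool) : |boolSign b| = 1 := by
  cases b <;> simp [boolSign]

lemma neg_one_pow_sum_ite {ι : Type*} [Fintype ι] (c : ι → Bool) :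
    (-1 : ℝ) ^ (∑ i, if c i then 1 else 0) = ∏ i, boolSign (c i) := by
  rw [← prod_pow_eq_pow_sum]
  exact prod_congr rfl fun i _ => by cases c i <;> simp [boolSign]

section IndexSign

variable {X Y : Type*}

/-- The character `γ ↦ (-1) ^ ∑ₓ Ind(α x, γ x)` of the bit strings `γ`, indexed by pointers `α`. -/
def indexSign [Fintype X] (α : X → Y) (γ : X → Y → Bool) : ℝ := ∏ x, boolSign (γ x (α x))

lemma indexSign_mul_self [Fintype X] (α : X → Y) (γ : X → Y → Bool) :
    indexSign α γ * indexSign α γ = 1 := by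
  rw [indexSign, ← prod_mul_distrib]
  exact prod_eq_one fun x _ => boolSign_mul_self _

variable [DecidableEq X] [DecidableEq Y]

def flipBit (x : X) (y : Y) (γ : X → Y → Bool) : X → Y → Bool :=
  Function.update γ x (Function.update (γ x) y (!γ x y))

lemma flipBit_apply (x x' : X) (y y' : Y) (γ : X → Y → Bool) :
    flipBit x y γ x' y' = if x' = x ∧ y' = y then !γ x' y' else γ x' y' := by
  simp only [flipBit, Function.update_apply]
  split_ifs <;> simp_all

lemma flipBit_involutive (x : X) (y : Y) : Function.Involutive (flipBit x y) := by
  intro γ; funext x' y'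
  simp only [flipBit_apply]
  split_ifs <;> simp_all

variable [Fintype X]

lemma indexSign_flipBit_of_ne {α : X → Y} {x : X} {y : Y} (h : α x ≠ y) (γ : X → Y → Bool) :
    indexSign α (flipBit x y γ) = indexSign α γ := by
  refine prod_congr rfl fun x' _ => ?_
  rw [flipBit_apply, if_neg]
  rintro ⟨rfl, hy⟩
  exact h hy

lemma indexSign_flipBit_self (α : X → Y) (x : X) (γ : X → Y → Bool) :
    indexSign α (flipBit x (α x) γ) = -indexSign α γ := by
  unfold indexSign
  rw [Fintype.prod_eq_mul_prod_compl x, Fintype.prod_eq_mul_prod_compl x (fun x' => _),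
    flipBit_apply, if_pos ⟨rfl, rfl⟩, boolSign_not, neg_mul]
  congr 2
  refine prod_congr rfl fun x' hx' => ?_
  rw [flipBit_apply, if_neg fun h => by simp_all]

variable [Fintype Y]

/-- Distinct pointer vectors give orthogonal characters: flipping the bit `(x, α' x)` at a
coordinate where `α x ≠ α' x` negates the summand. -/
theorem sum_indexSign_mul_indexSign (α α' : X → Y) :
    ∑ γ, indexSign α γ * indexSign α' γ =
      if α = α' then 2 ^ (Fintype.card X * Fintype.card Y) else 0 := by
  split_ifs with h
  · subst h
    simp only [indexSign_mul_self, sum_const, card_univ, Fintype.card_fun,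
      Fintype.card_bool, nsmul_eq_mul, mul_one]
    push_cast
    rw [← pow_mul, mul_comm]
  · obtain ⟨x, hx⟩ := Function.ne_iff.mp h
    have hS : ∑ γ, indexSign α γ * indexSign α' γ = -∑ γ, indexSign α γ * indexSign α' γ := by
      conv_lhs => rw [← Equiv.sum_comp (flipBit_involutive x (α' x)).toPerm]
      simp only [Function.Involutive.coe_toPerm, indexSign_flipBit_of_ne hx,
        indexSign_flipBit_self, mul_neg, sum_neg_distrib]
    linarith

theorem sum_sq_sum_mul_indexSign (P : (X → Y) → ℝ) :
    ∑ γ, (∑ α, P α * indexSign α γ) ^ 2 =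
      2 ^ (Fintype.card X * Fintype.card Y) * ∑ α, P α ^ 2 := by
  calc ∑ γ, (∑ α, P α * indexSign α γ) ^ 2
      = ∑ α, ∑ α', P α * P α' * ∑ γ, indexSign α γ * indexSign α' γ := by
        simp only [sq, sum_mul_sum]
        simp only [mul_sum]
        rw [sum_comm]
        refine sum_congr rfl fun α _ => ?_
        rw [sum_comm]
        exact sum_congr rfl fun α' _ => sum_congr rfl fun γ _ => by ring
    _ = 2 ^ (Fintype.card X * Fintype.card Y) * ∑ α, P α ^ 2 := by
        simp only [sum_indexSign_mul_indexSign, mul_ite, mul_zero, sum_ite_eq,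
          mem_univ, if_true, mul_sum]
        exact sum_congr rfl fun α _ => by ring

theorem sq_sum_sum_mul_indexSign_le (P : (X → Y) → ℝ) (Q : (X → Y → Bool) → ℝ) :
    (∑ α, ∑ γ, P α * Q γ * indexSign α γ) ^ 2 ≤
      2 ^ (Fintype.card X * Fintype.card Y) * (∑ α, P α ^ 2) * ∑ γ, Q γ ^ 2 := by
  have hswap : ∑ α, ∑ γ, P α * Q γ * indexSign α γ = ∑ γ, Q γ * ∑ α, P α * indexSign α γ := by
    rw [sum_comm]
    simp only [mul_sum]
    exact sum_congr rfl fun γ _ => sum_congr rfl fun α _ => by ring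
  rw [hswap, mul_comm _ (∑ γ, Q γ ^ 2), ← sum_sq_sum_mul_indexSign]
  exact sum_mul_sq_le_sq_mul_sq _ _ _

end IndexSign

lemma sum_sq_le_of_forall_le {ι : Type*} [Fintype ι] {f : ι → ℝ} {c : ℝ} (hf : ∀ i, 0 ≤ f i)
    (hfc : ∀ i, f i ≤ c) (hsum : ∑ i, f i = 1) : ∑ i, f i ^ 2 ≤ c :=
  calc ∑ i, f i ^ 2 ≤ ∑ i, c * f i :=
        sum_le_sum fun i _ => by rw [sq]; exact mul_le_mul_of_nonneg_right (hfc i) (hf i)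
    _ = c := by rw [← mul_sum, hsum, mul_one]

section FiberSum

variable {A B : Type*} [Fintype A] [DecidableEq B]

def fiberSum (f : A → ℝ) (r : A → B) (b : B) : ℝ := ∑ a with r a = b, f a

lemma fiberSum_nonneg {f : A → ℝ} (hf : ∀ a, 0 ≤ f a) (r : A → B) (b : B) :
    0 ≤ fiberSum f r b :=
  sum_nonneg fun a _ => hf a

variable [Fintype B]

lemma sum_fiberSum (f : A → ℝ) (r : A → B) : ∑ b, fiberSum f r b = ∑ a, f a :=
  sum_fiberwise _ r f

lemma sum_mul_comp_eq_sum_fiberSum (f : A → ℝ) (r : A → B) (k : B → ℝ) :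
    ∑ a, f a * k (r a) = ∑ b, fiberSum f r b * k b := by
  rw [← sum_fiberwise _ r]
  refine sum_congr rfl fun b _ => ?_
  rw [fiberSum, sum_mul]
  exact sum_congr rfl fun a ha => by rw [(mem_filter.mp ha).2]

end FiberSum

lemma sum_sum_mul_comp_eq_sum_sum_fiberSum {A A' B B' : Type*} [Fintype A] [Fintype A']
    [Fintype B] [Fintype B'] [DecidableEq B] [DecidableEq B'] (f : A → ℝ) (g : A' → ℝ)
    (r : A → B) (t : A' → B') (h : B → B' → ℝ) :
    ∑ a, ∑ a', f a * g a' * h (r a) (t a') =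
      ∑ b, ∑ b', fiberSum f r b * fiberSum g t b' * h b b' := by
  calc ∑ a, ∑ a', f a * g a' * h (r a) (t a')
      = ∑ a, f a * ∑ a', g a' * h (r a) (t a') := by simp only [mul_sum, mul_assoc]
    _ = ∑ a, f a * ∑ b', fiberSum g t b' * h (r a) b' := by
        simp only [sum_mul_comp_eq_sum_fiberSum g t]
    _ = ∑ b, fiberSum f r b * ∑ b', fiberSum g t b' * h b b' :=
        sum_mul_comp_eq_sum_fiberSum f r fun b => ∑ b', fiberSum g t b' * h b b'
    _ = ∑ b, ∑ b', fiberSum f r b * fiberSum g t b' * h b b' := by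
        simp only [mul_sum, mul_assoc]

section Buckets

variable {n : ℕ}

lemma pow_pos_of_fin {k : ℕ} (j : Fin (n ^ 256)) : 0 < n ^ k := by
  refine pow_pos (Nat.pos_of_ne_zero ?_) k
  rintro rfl
  exact absurd j.pos (by rw [zero_pow (by norm_num)]; exact lt_irrefl 0)

def bucketOffset (j : Fin (n ^ 256)) : Fin (n ^ 128) :=
  ⟨j.val % n ^ 128, Nat.mod_lt _ (pow_pos_of_fin j)⟩

def bucketPoint (ℓ j : Fin (n ^ 128)) : Fin (n ^ 256) :=
  ⟨n ^ 128 * ℓ + j, calc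
    n ^ 128 * ℓ + j < n ^ 128 * (ℓ + 1) := by rw [Nat.mul_succ]; exact Nat.add_lt_add_left j.isLt _
    _ ≤ n ^ 128 * n ^ 128 := Nat.mul_le_mul_left _ ℓ.isLt
    _ = n ^ 256 := by rw [← pow_add]⟩

lemma bucketPoint_bucketOffset {ℓ : Fin (n ^ 128)} {j : Fin (n ^ 256)} (h : bucket n j = ℓ) :
    bucketPoint ℓ (bucketOffset j) = j :=
  Fin.ext <| by
    simp only [bucketPoint, bucketOffset, ← h, bucket]
    exact Nat.div_add_mod _ _

end Buckets

section FocusedCoordinates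

variable {n : ℕ} {I : Finset (Fin n)} (σ : {i // i ∈ I} → Option Bool)
  (ℓ : {i // i ∈ I} → Fin (n ^ 128))

def pointerOffsets (a : {i // i ∈ I} → Fin (n ^ 256)) : {i // σ i = none} → Fin (n ^ 128) :=
  fun i => bucketOffset (a i)

def bucketBits (b : {i // i ∈ I} → Fin (n ^ 256) → Bool) :
    {i // σ i = none} → Fin (n ^ 128) → Bool :=
  fun i j => b i (bucketPoint (ℓ i) j)

def fixedSign : ℝ := ∏ i : {i // ¬σ i = none}, boolSign ((σ i.1).getD false)

lemma abs_fixedSign : |fixedSign σ| = 1 := by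
  rw [fixedSign, abs_prod]
  exact prod_eq_one fun i _ => abs_boolSign _

variable {σ ℓ}

lemma neg_one_pow_parity_eq_fixedSign_mul {a : {i // i ∈ I} → Fin (n ^ 256)}
    {b : {i // i ∈ I} → Fin (n ^ 256) → Bool} (hfix : ∀ i c, σ i = some c → b i (a i) = c)
    (hbuck : ∀ i, σ i = none → bucket n (a i) = ℓ i) :
    (-1 : ℝ) ^ (∑ i, if b i (a i) then 1 else 0) =
      fixedSign σ * indexSign (pointerOffsets σ a) (bucketBits σ ℓ b) := by
  rw [neg_one_pow_sum_ite, ← Fintype.prod_subtype_mul_prod_subtype (fun i => σ i = none),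
    mul_comm]
  congr 1
  · refine prod_congr rfl fun i _ => ?_
    obtain ⟨c, hc⟩ := Option.ne_none_iff_exists'.mp i.2
    rw [hfix i c hc, hc, Option.getD_some]
  · refine prod_congr rfl fun i _ => ?_
    rw [bucketBits, pointerOffsets, bucketPoint_bucketOffset (hbuck i i.2)]

theorem sum_mul_parity_eq_fixedSign_mul {px : ({i // i ∈ I} → Fin (n ^ 256)) → ℝ}
    {py : ({i // i ∈ I} → Fin (n ^ 256) → Bool) → ℝ}
    (hfix : ∀ x, px x ≠ 0 → ∀ y, py y ≠ 0 → ∀ i, ∀ b : Bool, σ i = some b → y i (x i) = b)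
    (hbuck : ∀ x, px x ≠ 0 → ∀ i, σ i = none → bucket n (x i) = ℓ i) :
    ∑ a, ∑ b, px a * py b * (-1 : ℝ) ^ (∑ i, if b i (a i) then 1 else 0) =
      fixedSign σ * ∑ α, ∑ γ, fiberSum px (pointerOffsets σ) α *
        fiberSum py (bucketBits σ ℓ) γ * indexSign α γ := by
  rw [← sum_sum_mul_comp_eq_sum_sum_fiberSum, mul_sum]
  refine sum_congr rfl fun a _ => ?_
  rw [mul_sum]
  refine sum_congr rfl fun b _ => ?_
  by_cases ha : px a = 0
  · simp [ha]
  by_cases hb : py b = 0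
  · simp [hb]
  rw [neg_one_pow_parity_eq_fixedSign_mul (hfix a ha b hb) (hbuck a ha)]
  ring

lemma fiberSum_pointerOffsets_le {px : ({i // i ∈ I} → Fin (n ^ 256)) → ℝ}
    (hpx : ∀ a, 0 ≤ px a) (hbuck : ∀ x, px x ≠ 0 → ∀ i, σ i = none → bucket n (x i) = ℓ i)
    {c : ℝ} (hx : ∀ a : {i // i ∈ I} → Fin (n ^ 256),
      ∑ x with ∀ i, σ i = none → x i = a i, px x ≤ c)
    (α : {i // σ i = none} → Fin (n ^ 128)) :
    fiberSum px (pointerOffsets σ) α ≤ c := by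
  -- the offset chosen on the fixed coordinates is irrelevant
  refine le_trans ?_ (hx fun i => bucketPoint (ℓ i) (if h : σ i = none then α ⟨i, h⟩ else ℓ i))
  rw [fiberSum, ← sum_filter_ne_zero]
  refine sum_le_sum_of_subset_of_nonneg (fun a ha => ?_) fun a _ _ => hpx a
  simp only [mem_filter, mem_univ, true_and] at ha ⊢
  intro i hi
  rw [dif_pos hi, ← ha.1, pointerOffsets, bucketPoint_bucketOffset (hbuck a ha.2 i hi)]

lemma fiberSum_bucketBits_le {py : ({i // i ∈ I} → Fin (n ^ 256) → Bool) → ℝ}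
    (hpy : ∀ b, 0 ≤ py b) {c : ℝ} (hy : ∀ γ : {i // i ∈ I} → Fin (n ^ 256) → Bool,
      ∑ y with ∀ i, σ i = none → ∀ j, bucket n j = ℓ i → y i j = γ i j, py y ≤ c)
    (γ : {i // σ i = none} → Fin (n ^ 128) → Bool) :
    fiberSum py (bucketBits σ ℓ) γ ≤ c := by
  refine le_trans ?_ (hy fun i j => if h : σ i = none then γ ⟨i, h⟩ (bucketOffset j) else false)
  refine sum_le_sum_of_subset_of_nonneg (fun b hb => ?_) fun b _ _ => hpy b
  simp only [mem_filter, mem_univ, true_and] at hb ⊢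
  intro i hi j hj
  rw [dif_pos hi, ← hb, bucketBits, bucketPoint_bucketOffset hj]

end FocusedCoordinates

lemma two_pow_mul_two_mul_rpow_neg (N : ℕ) : (2 : ℝ) ^ N * (2 * 2 ^ (-(N : ℝ))) = 2 := by
  rw [Real.rpow_neg zero_le_two, Real.rpow_natCast]
  field_simp

lemma two_mul_rpow_le_sq (n k c : ℕ) (hn : 2 ≤ n) (hk : 1 ≤ k) (hc : c ≤ 2 * k) :
    2 * ((n ^ 128 : ℕ) : ℝ) ^ (-(0.4 * (k : ℝ))) ≤
      ((1 / 2) * (n : ℝ) ^ (-(5 * (c : ℝ)))) ^ 2 := by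
  have hn1 : (1 : ℝ) ≤ n := by exact_mod_cast (by omega : 1 ≤ n)
  have hn0 : (0 : ℝ) < n := by linarith
  have hk' : (1 : ℝ) ≤ k := by exact_mod_cast hk
  have hc' : (c : ℝ) ≤ 2 * k := by exact_mod_cast hc
  have hlhs : ((n ^ 128 : ℕ) : ℝ) ^ (-(0.4 * (k : ℝ))) =
      (n : ℝ) ^ (-(20 * (k : ℝ))) / (n : ℝ) ^ (31.2 * (k : ℝ)) := by
    rw [div_eq_mul_inv, ← Real.rpow_neg hn0.le, ← Real.rpow_add hn0, Nat.cast_pow,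
      ← Real.rpow_natCast, ← Real.rpow_mul hn0.le]
    congr 1
    push_cast
    ring
  have hrhs : ((1 / 2) * (n : ℝ) ^ (-(5 * (c : ℝ)))) ^ 2 =
      1 / 4 * (n : ℝ) ^ (-(10 * (c : ℝ))) := by
    rw [mul_pow, ← Real.rpow_natCast (_ ^ _) 2, ← Real.rpow_mul hn0.le]
    norm_num
    ring_nf
  have h8 : (8 : ℝ) ≤ (n : ℝ) ^ (31.2 * (k : ℝ)) :=
    calc (8 : ℝ) = 2 ^ (3 : ℝ) := by norm_num
      _ ≤ (n : ℝ) ^ (3 : ℝ) := Real.rpow_le_rpow zero_le_two (by exact_mod_cast hn) zero_le_three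
      _ ≤ (n : ℝ) ^ (31.2 * (k : ℝ)) := Real.rpow_le_rpow_of_exponent_le hn1 (by linarith)
  have hmono : (n : ℝ) ^ (-(20 * (k : ℝ))) ≤ (n : ℝ) ^ (-(10 * (c : ℝ))) :=
    Real.rpow_le_rpow_of_exponent_le hn1 (by linarith)
  rw [hlhs, hrhs]
  calc 2 * ((n : ℝ) ^ (-(20 * (k : ℝ))) / (n : ℝ) ^ (31.2 * (k : ℝ)))
      ≤ 2 * ((n : ℝ) ^ (-(20 * (k : ℝ))) / 8) := by gcongr
    _ ≤ 1 / 4 * (n : ℝ) ^ (-(10 * (c : ℝ))) := by linarith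

/-- **Focused product distributions have small parity bias.** There is `N` such that for
all `n ≥ N` (with `m = n^256`): if `I ⊆ [n]` is nonempty and `x`, `y` are independent
with `x × y` focused, then `|E[(−1)^(Σ_{i∈I} Ind_m(x_i,y_i))]| ≤ (1/2)·n^(−5|I|)`. -/
theorem focused_small_bias :
    ∃ N : ℕ, ∀ n : ℕ, N ≤ n →
    ∀ I : Finset (Fin n), I.Nonempty →
    ∀ (px : ({i // i ∈ I} → Fin (n ^ 256)) → ℝ)
      (py : ({i // i ∈ I} → Fin (n ^ 256) → Bool) → ℝ),
      (∀ a, 0 ≤ px a) → (∑ a, px a = 1) →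
      (∀ b, 0 ≤ py b) → (∑ b, py b = 1) →
      Focused n I px py →
      |∑ a, ∑ b, px a * py b * (-1 : ℝ) ^ (∑ i, if b i (a i) then 1 else 0)| ≤
        (1 / 2) * (n : ℝ) ^ (-(5 * (I.card : ℝ))) := by
  refine ⟨2, fun n hn I hI px py hpx0 hpx1 hpy0 hpy1 ⟨σ, ℓ, hcard, hfix, hbuck, hx, hy⟩ => ?_⟩
  set k := Fintype.card {i // σ i = none}
  have hk : (univ.filter fun i => σ i = none).card = k := (Fintype.card_subtype _).symm
  rw [hk] at hcard hx hy
  have hk1 : 1 ≤ k := by have := hI.card_pos; omega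
  have hP : ∑ α, fiberSum px (pointerOffsets σ) α ^ 2 ≤
      ((n ^ 128 : ℕ) : ℝ) ^ (-(0.4 * (k : ℝ))) :=
    sum_sq_le_of_forall_le (fiberSum_nonneg hpx0 _) (fiberSum_pointerOffsets_le hpx0 hbuck hx)
      (by rw [sum_fiberSum, hpx1])
  have hQ : ∑ γ, fiberSum py (bucketBits σ ℓ) γ ^ 2 ≤
      2 * (2 : ℝ) ^ (-((k : ℝ) * ((n ^ 128 : ℕ) : ℝ))) :=
    sum_sq_le_of_forall_le (fiberSum_nonneg hpy0 _) (fiberSum_bucketBits_le hpy0 hy)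
      (by rw [sum_fiberSum, hpy1])
  rw [sum_mul_parity_eq_fixedSign_mul hfix hbuck, abs_mul, abs_fixedSign, one_mul]
  refine abs_le_of_sq_le_sq ?_ (by positivity)
  calc _ ≤ _ := sq_sum_sum_mul_indexSign_le _ _
    _ ≤ (2 : ℝ) ^ (k * n ^ 128) * ((n ^ 128 : ℕ) : ℝ) ^ (-(0.4 * (k : ℝ))) *
          (2 * (2 : ℝ) ^ (-((k : ℝ) * ((n ^ 128 : ℕ) : ℝ)))) := by
        rw [Fintype.card_fin]
        gcongr
    _ = 2 * ((n ^ 128 : ℕ) : ℝ) ^ (-(0.4 * (k : ℝ))) := by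
        rw [mul_right_comm, ← Nat.cast_mul, two_pow_mul_two_mul_rpow_neg, mul_comm]
    _ ≤ _ := two_mul_rpow_le_sq n k I.card hn hk1 hcard
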